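/- arXiv:2002.01466 — 3 statements merged into one kernel-verified Lean document; each statement's English description precedes it below -/
import Mathlib

section
/- Let G be a topological group acting continuously on a compact Hausdorff space X, and let Γ be a dense subgroup of G. If the G-action is n-filling (for every n nonempty open sets U₁,…,Uₙ in X there exist g₁,…,gₙ ∈ G with ⋃ᵢ gᵢ·Uᵢ = X), then the restricted Γ-action is also n-filling: for every n nonempty open sets U₁,…,Uₙ there exist γ₁,…,γₙ ∈ Γ with ⋃ᵢ γᵢ·Uᵢ = X. -/
open Pointwise

/-- The set of group elements translating a compact set into an open set is open. -/
theorem aux_isOpen_set {G X : Type*} [Group G] [TopologicalSpace G] [IsTopologicalGroup G]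
    [TopologicalSpace X] [MulAction G X]
    (hcont : Continuous fun p : G × X => p.1 • p.2)
    {K U : Set X} (hK : IsCompact K) (hU : IsOpen U) :
    IsOpen {h : G | K ⊆ h • U} := by
  rw [isOpen_iff_forall_mem_open]
  intro g₀ hg₀
  have hN : IsOpen {p : G × X | p.1⁻¹ • p.2 ∈ U} :=
    hU.preimage (hcont.comp ((continuous_fst.inv).prodMk continuous_snd))
  have hsub : ({g₀} ×ˢ K : Set (G × X)) ⊆ {p : G × X | p.1⁻¹ • p.2 ∈ U} := by
    rintro ⟨h, x⟩ ⟨hh, hx⟩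
    simp only [Set.mem_singleton_iff] at hh
    subst hh
    exact Set.mem_smul_set_iff_inv_smul_mem.mp (hg₀ hx)
  obtain ⟨u, v, hu, _, hgu, hKv, huv⟩ :=
    generalized_tube_lemma isCompact_singleton hK hN hsub
  refine ⟨u, fun h hh x hx => ?_, hu, hgu rfl⟩
  have hmem : (h, x) ∈ u ×ˢ v := ⟨hh, hKv hx⟩
  exact Set.mem_smul_set_iff_inv_smul_mem.mpr (huv hmem)

/-- If a topological group `G` acts continuously on a compact Hausdorff space `X` with an
`n`-filling action, then any dense subgroup `Γ` of `G` also acts `n`-fillingly. -/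
theorem stmt1 {G X : Type*} [Group G] [TopologicalSpace G] [IsTopologicalGroup G]
    [TopologicalSpace X] [CompactSpace X] [T2Space X] [MulAction G X]
    (hcont : Continuous fun p : G × X => p.1 • p.2)
    (Γ : Subgroup G) (hdense : Dense (Γ : Set G)) (n : ℕ)
    (hfill : ∀ U : Fin n → Set X, (∀ i, IsOpen (U i)) → (∀ i, (U i).Nonempty) →
      ∃ g : Fin n → G, ⋃ i, g i • U i = Set.univ) :
    ∀ U : Fin n → Set X, (∀ i, IsOpen (U i)) → (∀ i, (U i).Nonempty) →
      ∃ γ : Fin n → G, (∀ i, γ i ∈ Γ) ∧ ⋃ i, γ i • U i = Set.univ := by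
  intro U hUopen hUne
  -- choose shrunken open sets with closure inside U i
  have hshrink : ∀ i, ∃ V : Set X, IsOpen V ∧ V.Nonempty ∧ closure V ⊆ U i := by
    intro i
    obtain ⟨x, hx⟩ := hUne i
    obtain ⟨V, hVnh, hVcl, hVU⟩ :=
      exists_mem_nhds_isClosed_subset ((hUopen i).mem_nhds hx)
    exact ⟨interior V, isOpen_interior, ⟨x, mem_interior_iff_mem_nhds.mpr hVnh⟩,
      (closure_minimal interior_subset hVcl).trans hVU⟩
  choose V hVopen hVne hVU using hshrink
  obtain ⟨g, hg⟩ := hfill V hVopen hVne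
  -- compact sets K i := g i • closure (V i)
  set K : Fin n → Set X := fun i => g i • closure (V i) with hK
  have hKcomp : ∀ i, IsCompact (K i) :=
    fun i => (isClosed_closure.isCompact).image
      (hcont.comp (continuous_const.prodMk continuous_id))
  have hKcover : (⋃ i, K i) = Set.univ := by
    apply Set.eq_univ_of_univ_subset
    rw [← hg]
    exact Set.iUnion_mono fun i => Set.smul_set_mono subset_closure
  have hγ : ∀ i, ∃ γ : G, γ ∈ Γ ∧ K i ⊆ γ • U i := by
    intro i
    have hopen : IsOpen {h : G | K i ⊆ h • U i} :=
      aux_isOpen_set hcont (hKcomp i) (hUopen i)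
    have hne : {h : G | K i ⊆ h • U i}.Nonempty :=
      ⟨g i, Set.smul_set_mono (hVU i)⟩
    obtain ⟨γ, hγS, hγΓ⟩ := hdense.inter_open_nonempty _ hopen hne
    exact ⟨γ, hγΓ, hγS⟩
  choose γ hγΓ hγK using hγ
  refine ⟨γ, hγΓ, Set.eq_univ_of_univ_subset ?_⟩
  rw [← hKcover]
  exact Set.iUnion_mono hγK
end

section
/- Let Γ act by homeomorphisms on a compact Hausdorff space X with at least two points, and suppose that for every compact (equivalently closed) proper subset K ⊊ X there exists γ ∈ Γ with γ·K ∩ K = ∅. Suppose moreover that for every nonempty open U and closed K ⊊ X with K ⊉ U there exists γ with γ·(X ∖ (U ∖ K)) ⊆ U. Then for every closed K ⊊ X and nonempty open U ⊆ X there exists γ ∈ Γ with γ·K ⊆ U, i.e., the action is extremely proximal. -/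
open Pointwise

/-- Combinatorial step towards extreme proximality: if every closed proper subset of a compact
Hausdorff `Γ`-space `X` (with at least two points) can be moved off itself, and every closed
`K ⊊ X` not containing a given nonempty open `U` admits `γ` with `γ • (X ∖ (U ∖ K)) ⊆ U`,
then the action is extremely proximal. -/
theorem stmt13 {Γ X : Type*} [Group Γ] [TopologicalSpace X] [CompactSpace X] [T2Space X]
    [Nontrivial X] [MulAction Γ X] (hcont : ∀ γ : Γ, Continuous fun x : X => γ • x)
    (hdisj : ∀ K : Set X, IsClosed K → K ≠ Set.univ → ∃ γ : Γ, (γ • K) ∩ K = ∅)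
    (hmove : ∀ (U K : Set X), IsOpen U → U.Nonempty → IsClosed K → K ≠ Set.univ →
      ¬ U ⊆ K → ∃ γ : Γ, γ • (U \ K)ᶜ ⊆ U) :
    ∀ K : Set X, IsClosed K → K ≠ Set.univ →
      ∀ U : Set X, IsOpen U → U.Nonempty → ∃ γ : Γ, γ • K ⊆ U := by
  intro K hKc hKne U hUo hUne
  by_cases hUK : U ⊆ K
  · -- U ⊆ K; first move K off itself
    obtain ⟨γ₀, hγ₀⟩ := hdisj K hKc hKne
    have hK'c : IsClosed (γ₀ • K) := by
      have : IsCompact ((fun x : X => γ₀ • x) '' K) :=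
        (hKc.isCompact).image (hcont γ₀)
      rw [Set.image_smul] at this
      exact this.isClosed
    have hK'ne : γ₀ • K ≠ Set.univ := by
      intro h
      apply hKne
      have := congrArg (fun S => γ₀⁻¹ • S) h
      simpa [inv_smul_smul, Set.smul_set_univ] using this
    have hnsub : ¬ U ⊆ γ₀ • K := by
      intro h
      obtain ⟨x, hx⟩ := hUne
      exact Set.eq_empty_iff_forall_notMem.mp hγ₀ x ⟨h hx, hUK hx⟩
    obtain ⟨γ, hγ⟩ := hmove U (γ₀ • K) hUo hUne hK'c hK'ne hnsub
    refine ⟨γ * γ₀, ?_⟩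
    have hsub : γ₀ • K ⊆ (U \ γ₀ • K)ᶜ := fun x hx hmem => hmem.2 hx
    calc (γ * γ₀) • K = γ • γ₀ • K := by rw [mul_smul]
      _ ⊆ γ • (U \ γ₀ • K)ᶜ := Set.smul_set_mono hsub
      _ ⊆ U := hγ
  · obtain ⟨γ, hγ⟩ := hmove U K hUo hUne hKc hKne hUK
    refine ⟨γ, ?_⟩
    have hsub : K ⊆ (U \ K)ᶜ := fun x hx hmem => hmem.2 hx
    exact (Set.smul_set_mono hsub).trans hγ
end

section
/- Let p be a prime and let Γ = SL(2, ℤ[1/p]), viewed as a subgroup of SL(2,ℝ) × SL(2,ℚ_p) via the two embeddings. Then the image of Γ under the projection to SL(2,ℝ) is dense in SL(2,ℝ), and the image under the projection to SL(2,ℚ_p) is dense in SL(2,ℚ_p). -/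
open Matrix

/-- The subspace topology on `SL(2,k)` induced from the space of matrices. -/
instance sltop (k : Type*) [Field k] [TopologicalSpace k] :
    TopologicalSpace (Matrix.SpecialLinearGroup (Fin 2) k) :=
  inferInstanceAs (TopologicalSpace {A : Matrix (Fin 2) (Fin 2) k // A.det = 1})

section Aux

/-- The set of elements of the form `z / p ^ n`, i.e. the image of `ℤ[1/p]`. -/
def Dset (k : Type*) [Field k] (p : ℕ) : Set k :=
  {t | ∃ (z : ℤ) (n : ℕ), t = (z : k) / (p : k) ^ n}

variable {k : Type*} [Field k] {p : ℕ}

lemma Dset.one_mem : (1 : k) ∈ Dset k p := ⟨1, 0, by simp⟩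

lemma Dset.add_mem (hp : (p : k) ≠ 0) {a b : k} (ha : a ∈ Dset k p) (hb : b ∈ Dset k p) :
    a + b ∈ Dset k p := by
  obtain ⟨z, n, rfl⟩ := ha
  obtain ⟨w, m, rfl⟩ := hb
  refine ⟨z * p ^ m + w * p ^ n, n + m, ?_⟩
  have hn : ((p : k)) ^ n ≠ 0 := pow_ne_zero _ hp
  have hm : ((p : k)) ^ m ≠ 0 := pow_ne_zero _ hp
  push_cast
  rw [pow_add, div_add_div _ _ hn hm, div_eq_div_iff (by exact mul_ne_zero hn hm)
    (by exact mul_ne_zero hn hm)]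
  ring

lemma Dset.mul_mem {a b : k} (ha : a ∈ Dset k p) (hb : b ∈ Dset k p) :
    a * b ∈ Dset k p := by
  obtain ⟨z, n, rfl⟩ := ha
  obtain ⟨w, m, rfl⟩ := hb
  refine ⟨z * w, n + m, ?_⟩
  push_cast
  rw [pow_add]
  ring

/-- The basic product of elementary matrices. -/
def Fmap (q : k × k × k) : Matrix.SpecialLinearGroup (Fin 2) k :=
  ⟨!![1 + q.1 * q.2.1, (1 + q.1 * q.2.1) * q.2.2 + q.1; q.2.1, q.2.1 * q.2.2 + 1], by
    rw [Matrix.det_fin_two_of]; ring⟩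

lemma Fmap_mem (hp : (p : k) ≠ 0) {q : k × k × k} (h1 : q.1 ∈ Dset k p)
    (h2 : q.2.1 ∈ Dset k p) (h3 : q.2.2 ∈ Dset k p) :
    ∀ i j : Fin 2, (Fmap q : Matrix (Fin 2) (Fin 2) k) i j ∈ Dset k p := by
  have h11 : 1 + q.1 * q.2.1 ∈ Dset k p :=
    Dset.add_mem hp Dset.one_mem (Dset.mul_mem h1 h2)
  intro i j
  fin_cases i <;> fin_cases j
  · simpa [Fmap] using h11
  · simpa [Fmap] using Dset.add_mem hp (Dset.mul_mem h11 h3) h1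
  · simpa [Fmap] using h2
  · simpa [Fmap] using Dset.add_mem hp (Dset.mul_mem h2 h3) Dset.one_mem

lemma Fmap_surj (g : Matrix.SpecialLinearGroup (Fin 2) k)
    (hc : (g : Matrix (Fin 2) (Fin 2) k) 1 0 ≠ 0) : g ∈ Set.range (Fmap (k := k)) := by
  have hdet : (g : Matrix (Fin 2) (Fin 2) k) 0 0 * (g : Matrix (Fin 2) (Fin 2) k) 1 1 -
      (g : Matrix (Fin 2) (Fin 2) k) 0 1 * (g : Matrix (Fin 2) (Fin 2) k) 1 0 = 1 := by
    have := g.prop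
    rwa [Matrix.det_fin_two] at this
  refine ⟨(((g : Matrix (Fin 2) (Fin 2) k) 0 0 - 1) / (g : Matrix (Fin 2) (Fin 2) k) 1 0,
    (g : Matrix (Fin 2) (Fin 2) k) 1 0,
    ((g : Matrix (Fin 2) (Fin 2) k) 1 1 - 1) / (g : Matrix (Fin 2) (Fin 2) k) 1 0), ?_⟩
  apply Subtype.ext
  ext i j
  fin_cases i <;> fin_cases j
  · simp only [Fmap]
    simp
    field_simp
    ring
  · simp only [Fmap]
    simp
    field_simp
    linear_combination hdet
  · simp [Fmap]
  · simp only [Fmap]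
    simp
    field_simp
    ring

end Aux

section DenseSec

variable {k : Type*} [NontriviallyNormedField k] {p : ℕ}

lemma continuous_Fmap : Continuous (Fmap (k := k)) := by
  apply Continuous.subtype_mk
  apply continuous_matrix
  intro i j
  fin_cases i <;> fin_cases j <;> simp [Fmap] <;> fun_prop

lemma dense_sl2 (hp : (p : k) ≠ 0) (hD : Dense (Dset k p)) :
    Dense {g : Matrix.SpecialLinearGroup (Fin 2) k |
      ∀ i j : Fin 2, ∃ (z : ℤ) (n : ℕ),
        (g : Matrix (Fin 2) (Fin 2) k) i j = (z : k) / (p : k) ^ n} := by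
  set S := {g : Matrix.SpecialLinearGroup (Fin 2) k |
      ∀ i j : Fin 2, ∃ (z : ℤ) (n : ℕ),
        (g : Matrix (Fin 2) (Fin 2) k) i j = (z : k) / (p : k) ^ n} with hS
  have hD3 : Dense ((Dset k p) ×ˢ ((Dset k p) ×ˢ (Dset k p))) := hD.prod (hD.prod hD)
  have himg : Fmap '' ((Dset k p) ×ˢ ((Dset k p) ×ˢ (Dset k p))) ⊆ S := by
    rintro _ ⟨q, ⟨h1, h2, h3⟩, rfl⟩
    exact Fmap_mem hp h1 h2 h3
  have hrange : Set.range (Fmap (k := k)) ⊆ closure S :=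
    (continuous_Fmap.range_subset_closure_image_dense hD3).trans (closure_mono himg)
  intro g
  by_cases hc : (g : Matrix (Fin 2) (Fin 2) k) 1 0 ≠ 0
  · exact hrange (Fmap_surj g hc)
  push_neg at hc
  set G : k → Matrix.SpecialLinearGroup (Fin 2) k := fun ε =>
    g * ⟨!![1, 0; ε, 1], by rw [Matrix.det_fin_two_of]; ring⟩ with hG
  have hGcont : Continuous G := by
    apply Continuous.subtype_mk
    apply continuous_matrix
    intro i j
    simp only [hG, Matrix.SpecialLinearGroup.coe_mul, Matrix.mul_apply, Fin.sum_univ_two]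
    fin_cases i <;> fin_cases j <;> simp <;> fun_prop
  have hG0 : G 0 = g := by
    apply Subtype.ext
    have h1 : (!![1, 0; (0:k), 1]) = (1 : Matrix (Fin 2) (Fin 2) k) := by
      rw [Matrix.one_fin_two]
    simp [hG, h1]
    exact congrArg Subtype.val (mul_one g)
  have hd : (g : Matrix (Fin 2) (Fin 2) k) 1 1 ≠ 0 := by
    intro h
    have := g.prop
    rw [Matrix.det_fin_two, hc, h] at this
    simp at this
  have hGsub : G '' {ε : k | ε ≠ 0} ⊆ closure S := by
    rintro _ ⟨ε, hε, rfl⟩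
    apply hrange
    apply Fmap_surj
    have h10 : ((G ε : Matrix.SpecialLinearGroup (Fin 2) k) :
        Matrix (Fin 2) (Fin 2) k) 1 0 = (g : Matrix (Fin 2) (Fin 2) k) 1 1 * ε := by
      show ((g : Matrix (Fin 2) (Fin 2) k) * !![1, 0; ε, 1]) 1 0 = _
      simp [hG, Matrix.SpecialLinearGroup.coe_mul, Matrix.mul_apply, Fin.sum_univ_two, hc]
    rw [h10]
    exact mul_ne_zero hd hε
  have h0 : (0 : k) ∈ closure {ε : k | ε ≠ 0} := by
    rw [Metric.mem_closure_iff]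
    intro ε hε
    obtain ⟨b, hb0, hbε⟩ := NormedField.exists_norm_lt k hε
    exact ⟨b, by simpa using norm_pos_iff.mp hb0, by rwa [dist_comm, dist_zero_right]⟩
  have hmem : g ∈ G '' closure {ε : k | ε ≠ 0} := ⟨0, h0, hG0⟩
  have := (image_closure_subset_closure_image hGcont) hmem
  have := (closure_mono hGsub) this
  rwa [closure_closure] at this

end DenseSec

lemma dense_Dset_real {p : ℕ} (hp : 1 < p) : Dense (Dset ℝ p) := by
  have hp1 : (1 : ℝ) < p := by exact_mod_cast hp
  intro x
  rw [Metric.mem_closure_iff]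
  intro ε hε
  obtain ⟨n, hn⟩ := pow_unbounded_of_one_lt (ε⁻¹) hp1
  have hpn : (0 : ℝ) < (p : ℝ) ^ n := by positivity
  refine ⟨(⌊x * p ^ n⌋ : ℝ) / (p : ℝ) ^ n, ⟨⌊x * p ^ n⌋, n, rfl⟩, ?_⟩
  have h1 : (⌊x * p ^ n⌋ : ℝ) ≤ x * p ^ n := Int.floor_le _
  have h2 : x * p ^ n < ⌊x * p ^ n⌋ + 1 := Int.lt_floor_add_one _
  have hεn : 1 < ε * (p : ℝ) ^ n := by
    rw [inv_lt_iff_one_lt_mul₀ hε] at hn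
    nlinarith
  rw [Real.dist_eq, abs_sub_lt_iff]
  constructor
  · have e1 : x - (⌊x * p ^ n⌋ : ℝ) / (p : ℝ) ^ n = (x * p ^ n - ⌊x * p ^ n⌋) / (p : ℝ) ^ n := by
      field_simp
    rw [e1, div_lt_iff₀ hpn]
    nlinarith
  · have e2 : (⌊x * p ^ n⌋ : ℝ) / (p : ℝ) ^ n - x = ((⌊x * p ^ n⌋ : ℝ) - x * p ^ n) / (p : ℝ) ^ n := by
      field_simp
    rw [e2, div_lt_iff₀ hpn]
    nlinarith

lemma dense_Dset_padic (p : ℕ) [hp : Fact p.Prime] : Dense (Dset ℚ_[p] p) := by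
  have hp1 : (1 : ℝ) < p := by exact_mod_cast hp.out.one_lt
  have hp0 : (0 : ℝ) < p := by positivity
  intro x
  rw [Metric.mem_closure_iff]
  intro ε hε
  obtain ⟨m, hm⟩ := pow_unbounded_of_one_lt (‖x‖) hp1
  have hnormp : ‖(p : ℚ_[p])‖ = ((p : ℝ))⁻¹ := Padic.norm_p
  have hmem : ‖(p : ℚ_[p]) ^ m * x‖ ≤ 1 := by
    rw [norm_mul, norm_pow, hnormp, inv_pow, inv_mul_le_iff₀ (by positivity)]
    simpa using hm.le
  set y : ℤ_[p] := ⟨(p : ℚ_[p]) ^ m * x, hmem⟩ with hy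
  have hpm : (0 : ℝ) < (p : ℝ) ^ m := by positivity
  obtain ⟨z, hz⟩ := (PadicInt.denseRange_intCast (p := p)).exists_dist_lt y
    (show 0 < ε / (p : ℝ) ^ m by positivity)
  refine ⟨(z : ℚ_[p]) / (p : ℚ_[p]) ^ m, ⟨z, m, rfl⟩, ?_⟩
  have hppow : ((p : ℚ_[p]) ^ m) ≠ 0 := by
    apply pow_ne_zero
    exact_mod_cast (Nat.cast_ne_zero (R := ℚ_[p])).mpr hp.out.ne_zero
  have hycoe : (y : ℚ_[p]) = (p : ℚ_[p]) ^ m * x := rfl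
  have key : x - (z : ℚ_[p]) / (p : ℚ_[p]) ^ m =
      (((y : ℚ_[p]) - (z : ℚ_[p]))) / (p : ℚ_[p]) ^ m := by
    rw [hycoe]
    field_simp
  have hdist : ‖(y : ℚ_[p]) - (z : ℚ_[p])‖ < ε / (p : ℝ) ^ m := by
    have e : dist y ((z : ℤ_[p])) = ‖(y : ℚ_[p]) - (z : ℚ_[p])‖ := by
      rw [dist_eq_norm, PadicInt.norm_def, PadicInt.coe_sub, PadicInt.coe_intCast]
    rwa [e] at hz
  rw [dist_eq_norm, key, norm_div, norm_pow, hnormp, inv_pow, div_eq_mul_inv, inv_inv]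
  calc ‖(y : ℚ_[p]) - (z : ℚ_[p])‖ * (p : ℝ) ^ m
      < (ε / (p : ℝ) ^ m) * (p : ℝ) ^ m := mul_lt_mul_of_pos_right hdist hpm
    _ = ε := by field_simp

/-- For a prime `p`, the image of `SL(2,ℤ[1/p])` is dense in `SL(2,ℝ)` and dense in
`SL(2,ℚ_p)` (matrices with entries of the form `z / pⁿ`). -/
theorem stmt17 (p : ℕ) [Fact p.Prime] :
    Dense {g : Matrix.SpecialLinearGroup (Fin 2) ℝ |
        ∀ i j : Fin 2, ∃ (z : ℤ) (n : ℕ),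
          (g : Matrix (Fin 2) (Fin 2) ℝ) i j = (z : ℝ) / (p : ℝ) ^ n} ∧
    Dense {g : Matrix.SpecialLinearGroup (Fin 2) ℚ_[p] |
        ∀ i j : Fin 2, ∃ (z : ℤ) (n : ℕ),
          (g : Matrix (Fin 2) (Fin 2) ℚ_[p]) i j = (z : ℚ_[p]) / (p : ℚ_[p]) ^ n} := by
  have hprime := (Fact.out : p.Prime)
  constructor
  · exact dense_sl2 (by exact_mod_cast hprime.ne_zero) (dense_Dset_real hprime.one_lt)
  · exact dense_sl2 (by exact_mod_cast hprime.ne_zero) (dense_Dset_padic p)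
end
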